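/- Let n, m ≥ 1 and let F : 𝔽₂ⁿ → 𝔽₂ᵐ be a function with differential uniformity k = Δ_F, and let N_k = |{(a,b) : a ∈ 𝔽₂ⁿ, a ≠ 0, b ∈ 𝔽₂ᵐ, δ_F(a,b) = k}|. Then 2·𝒜(F) ≥ (k² − 2k)·N_k + (2ⁿ − 1)·2ⁿ, with equality if and only if δ_F(a,b) ∈ {0, 2, k} for every a ≠ 0 and every b. -/

import Mathlib

open Finset

/-- `δ_F(a,b) = |{x : F(x+a) - F(x) = b}|`. -/
def deltaF {G₁ G₂ : Type*} [AddCommGroup G₁] [Fintype G₁] [DecidableEq G₁]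
    [AddCommGroup G₂] [DecidableEq G₂] (F : G₁ → G₂) (a : G₁) (b : G₂) : ℕ :=
  (univ.filter fun x => F (x + a) - F x = b).card

/-- The ambiguity `𝒜(F) = Σ_{a ≠ 0} Σ_b (δ_F(a,b) choose 2)`. -/
def ambiguity {G₁ G₂ : Type*} [AddCommGroup G₁] [Fintype G₁] [DecidableEq G₁]
    [AddCommGroup G₂] [Fintype G₂] [DecidableEq G₂] (F : G₁ → G₂) : ℕ :=
  ∑ a ∈ univ.filter (fun a : G₁ => a ≠ 0), ∑ b : G₂, (deltaF F a b).choose 2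

/-- The differential uniformity `Δ_F = max_{a ≠ 0, b} δ_F(a,b)`. -/
def diffUnif {G₁ G₂ : Type*} [AddCommGroup G₁] [Fintype G₁] [DecidableEq G₁]
    [AddCommGroup G₂] [Fintype G₂] [DecidableEq G₂] (F : G₁ → G₂) : ℕ :=
  (univ.filter (fun a : G₁ => a ≠ 0)).sup fun a => univ.sup fun b : G₂ => deltaF F a b

/-!
For `a ≠ 0` the values `δ_F(a, b)` sum to `2ⁿ` over `b`, and they are all even, because
`x ↦ x + a` is a fixed-point-free involution of each solution set. Since
`δ(δ - 1) = δ + δ(δ - 2)`, pairs with `δ_F(a,b) = k` contribute exactly `k² - 2k + δ_F(a,b)` to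
`2 𝒜(F)`, and every other pair contributes `δ_F(a,b)` plus the slack `δ_F(a,b)(δ_F(a,b) - 2)`,
which is nonnegative for even values and vanishes exactly at `0` and `2`.
-/

lemma two_mul_choose_two_eq (d : ℕ) : 2 * (d.choose 2 : ℤ) = d * (d - 1) := by
  have h := Nat.cast_choose_two ℚ d
  exact_mod_cast show ((2 * (d.choose 2 : ℤ) : ℤ) : ℚ) = ((d * (d - 1) : ℤ) : ℚ) by
    push_cast; rw [h]; ring

def ambiguitySlack (k d : ℕ) : ℤ := if d = k then 0 else d * (d - 2)

lemma two_mul_choose_two_eq_slack (k d : ℕ) :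
    2 * (d.choose 2 : ℤ) =
      ((k : ℤ) ^ 2 - 2 * k) * (if d = k then 1 else 0) + d + ambiguitySlack k d := by
  rw [two_mul_choose_two_eq, ambiguitySlack]
  split_ifs with h
  · subst h; ring
  · ring

lemma ambiguitySlack_nonneg (k : ℕ) {d : ℕ} (hd : Even d) : 0 ≤ ambiguitySlack k d := by
  unfold ambiguitySlack
  split_ifs
  · rfl
  obtain ⟨r, rfl⟩ := hd
  rcases r with _ | r
  · simp
  · push_cast; nlinarith

lemma ambiguitySlack_eq_zero_iff (k d : ℕ) :
    ambiguitySlack k d = 0 ↔ d = 0 ∨ d = 2 ∨ d = k := by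
  unfold ambiguitySlack
  split_ifs with h
  · simp [h]
  · simp only [mul_eq_zero, sub_eq_zero, h, or_false]
    norm_cast

section Differential

variable {G₁ G₂ : Type*} [AddCommGroup G₁] [Fintype G₁] [DecidableEq G₁]
  [AddCommGroup G₂] [DecidableEq G₂]

lemma sum_deltaF [Fintype G₂] (F : G₁ → G₂) (a : G₁) :
    ∑ b, deltaF F a b = Fintype.card G₁ :=
  (card_eq_sum_card_fiberwise fun x _ => mem_univ (F (x + a) - F x)).symm

lemma deltaF_even {F : G₁ → G₂} {a : G₁} (ha : a ≠ 0) (haa : a + a = 0) {b : G₂}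
    (hbb : b + b = 0) : Even (deltaF F a b) := by
  rw [← ZMod.natCast_eq_zero_iff_even, deltaF, card_eq_sum_ones, Nat.cast_sum]
  have hmem : ∀ x ∈ univ.filter (fun x => F (x + a) - F x = b),
      x + a ∈ univ.filter (fun x => F (x + a) - F x = b) := by
    intro x hx
    simp only [mem_filter, mem_univ, true_and] at hx ⊢
    rw [add_assoc, haa, add_zero, ← neg_sub, hx, neg_eq_iff_add_eq_zero, hbb]
  refine sum_involution (fun x _ => x + a) (fun _ _ => by decide) (fun x _ _ => ?_) hmem
    (fun x _ => by rw [add_assoc, haa, add_zero])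
  simpa using ha

lemma two_mul_ambiguity_eq [Fintype G₂] (F : G₁ → G₂) (k : ℕ) :
    2 * (ambiguity F : ℤ) =
      ((k : ℤ) ^ 2 - 2 * k) *
          ((univ.filter fun p : G₁ × G₂ => p.1 ≠ 0 ∧ deltaF F p.1 p.2 = k).card : ℤ) +
        ((Fintype.card G₁ : ℤ) - 1) * Fintype.card G₁ +
        ∑ a ∈ univ.filter (fun a : G₁ => a ≠ 0), ∑ b, ambiguitySlack k (deltaF F a b) := by
  have hcount : ((univ.filter fun p : G₁ × G₂ => p.1 ≠ 0 ∧ deltaF F p.1 p.2 = k).card : ℤ) =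
      ∑ a ∈ univ.filter (fun a : G₁ => a ≠ 0), ∑ b, if deltaF F a b = k then 1 else 0 := by
    rw [card_filter, Nat.cast_sum, Fintype.sum_prod_type, sum_filter]
    refine sum_congr rfl fun a _ => ?_
    by_cases ha : a = 0 <;> simp [ha]
  have hsum : ∑ a ∈ univ.filter (fun a : G₁ => a ≠ 0), ∑ b, (deltaF F a b : ℤ) =
      ((Fintype.card G₁ : ℤ) - 1) * Fintype.card G₁ := by
    rw [sum_congr rfl fun a _ => by rw [← Nat.cast_sum, sum_deltaF], sum_const, filter_ne',
      card_erase_of_mem (mem_univ _), card_univ, nsmul_eq_mul, Nat.cast_pred Fintype.card_pos]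
  rw [hcount, ← hsum, ambiguity, Nat.cast_sum, mul_sum, mul_sum]
  simp_rw [Nat.cast_sum, mul_sum, two_mul_choose_two_eq_slack k, sum_add_distrib]

end Differential

theorem ambiguity_lower_bound_boolean_general {n m : ℕ}
    (F : (Fin n → ZMod 2) → (Fin m → ZMod 2)) (k : ℕ)
    (Nk : ℕ)
    (hNk : Nk = (univ.filter fun p : (Fin n → ZMod 2) × (Fin m → ZMod 2) =>
      p.1 ≠ 0 ∧ deltaF F p.1 p.2 = k).card) :
    (((k : ℤ) ^ 2 - 2 * (k : ℤ)) * (Nk : ℤ) + (2 ^ n - 1) * 2 ^ n ≤ 2 * (ambiguity F : ℤ)) ∧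
      (2 * (ambiguity F : ℤ) = ((k : ℤ) ^ 2 - 2 * (k : ℤ)) * (Nk : ℤ) + (2 ^ n - 1) * 2 ^ n ↔
        ∀ a : Fin n → ZMod 2, a ≠ 0 → ∀ b : Fin m → ZMod 2,
          deltaF F a b = 0 ∨ deltaF F a b = 2 ∨ deltaF F a b = k) := by
  have hslack : ∀ a ∈ univ.filter (fun a : Fin n → ZMod 2 => a ≠ 0), ∀ b ∈ univ,
      0 ≤ ambiguitySlack k (deltaF F a b) := fun a ha b _ =>
    ambiguitySlack_nonneg k <|
      deltaF_even (mem_filter.1 ha).2 (ZModModule.add_self a) (ZModModule.add_self b)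
  have hcard : (Fintype.card (Fin n → ZMod 2) : ℤ) = 2 ^ n := by simp
  rw [two_mul_ambiguity_eq F k, hcard, ← hNk]
  refine ⟨le_add_of_nonneg_right <| sum_nonneg fun a ha => sum_nonneg (hslack a ha), ?_⟩
  rw [add_eq_left, sum_eq_zero_iff_of_nonneg fun a ha => sum_nonneg (hslack a ha)]
  refine forall_congr' fun a => ?_
  simp only [mem_filter, mem_univ, true_and]
  refine imp_congr_right fun ha => ?_
  simp only [sum_eq_zero_iff_of_nonneg (hslack a (mem_filter.2 ⟨mem_univ a, ha⟩)), mem_univ,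
    true_imp_iff, ambiguitySlack_eq_zero_iff]

theorem ambiguity_lower_bound_boolean {n m : ℕ} (hn : 1 ≤ n) (hm : 1 ≤ m)
    (F : (Fin n → ZMod 2) → (Fin m → ZMod 2)) (k : ℕ) (hk : k = diffUnif F)
    (Nk : ℕ)
    (hNk : Nk = (univ.filter fun p : (Fin n → ZMod 2) × (Fin m → ZMod 2) =>
      p.1 ≠ 0 ∧ deltaF F p.1 p.2 = k).card) :
    (((k : ℤ) ^ 2 - 2 * (k : ℤ)) * (Nk : ℤ) + (2 ^ n - 1) * 2 ^ n ≤ 2 * (ambiguity F : ℤ)) ∧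
      (2 * (ambiguity F : ℤ) = ((k : ℤ) ^ 2 - 2 * (k : ℤ)) * (Nk : ℤ) + (2 ^ n - 1) * 2 ^ n ↔
        ∀ a : Fin n → ZMod 2, a ≠ 0 → ∀ b : Fin m → ZMod 2,
          deltaF F a b = 0 ∨ deltaF F a b = 2 ∨ deltaF F a b = k) :=
  ambiguity_lower_bound_boolean_general F k Nk hNk
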